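/- Suppose γ_L is gamma-distributed with shape mL and scale θ_L, possibly depending on L, such that (P/N₀)·θ_L·mL → ∞ as L → ∞ for fixed P, N₀ > 0. Then E[log(1 + (P/N₀)γ_L)] / log(1 + (P/N₀)θ_L mL) → 1 as L → ∞. -/

import Mathlib

open MeasureTheory ProbabilityTheory Filter

/-!
Jensen's inequality gives `E log (1 + c γ) ≤ log (1 + c E γ)`. Conversely, Chebyshev's
inequality puts mass at least `1 - 4 Var γ / (E γ)² = 1 - 4 / (m L)` on
`{γ ≥ E γ / 2}`, where `log (1 + c γ) ≥ log (1 + c E γ / 2)`. With `t = c θ_L m L → ∞`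
the ratio is therefore squeezed between `(1 - 4 / (m L)) · log (1 + t / 2) / log (1 + t)`
and `1`, and both bounds tend to `1`.
-/

open Real Set Topology

section LogOneAdd

variable {Ω : Type*} [MeasurableSpace Ω] {μ : Measure Ω} {X : Ω → ℝ} {c : ℝ}

lemma integrable_log_one_add_mul (hX0 : ∀ᵐ ω ∂μ, 0 ≤ X ω) (hX : Integrable X μ)
    (hc : 0 ≤ c) :
    Integrable (fun ω ↦ log (1 + c * X ω)) μ := by
  refine (hX.const_mul c).mono' (measurable_log.comp_aemeasurable
    ((hX.aemeasurable.const_mul c).const_add 1)).aestronglyMeasurable ?_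
  filter_upwards [hX0] with ω hω
  have hcX : 0 ≤ c * X ω := mul_nonneg hc hω
  rw [norm_of_nonneg (log_nonneg (by linarith))]
  linarith [log_le_sub_one_of_pos (by linarith : 0 < 1 + c * X ω)]

lemma integral_log_one_add_mul_le [IsProbabilityMeasure μ] (hX0 : ∀ᵐ ω ∂μ, 0 ≤ X ω)
    (hX : Integrable X μ) (hc : 0 ≤ c) :
    ∫ ω, log (1 + c * X ω) ∂μ ≤ log (1 + c * μ[X]) := by
  -- Jensen needs a closed set, and `log` is not concave on `[0, ∞)` since `log 0 = 0`.
  have hconcave : ConcaveOn ℝ (Ici 1) log :=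
    strictConcaveOn_log_Ioi.concaveOn.subset (Ici_subset_Ioi.2 one_pos) (convex_Ici 1)
  have hcont : ContinuousOn log (Ici 1) :=
    continuousOn_log.mono fun x hx ↦ (zero_lt_one.trans_le hx).ne'
  have hjensen := hconcave.le_map_integral hcont isClosed_Ici
    (hX0.mono fun ω hω ↦ le_add_of_nonneg_right (mul_nonneg hc hω))
    ((integrable_const 1).add (hX.const_mul c)) (integrable_log_one_add_mul hX0 hX hc)
  rwa [integral_add (integrable_const 1) (hX.const_mul c), integral_const_mul,
    integral_const, probReal_univ, one_smul] at hjensen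

lemma le_integral_log_one_add_mul [IsProbabilityMeasure μ] (hX0 : ∀ᵐ ω ∂μ, 0 ≤ X ω)
    (hX : MemLp X 2 μ) (hc : 0 ≤ c) (hmean : 0 < μ[X]) :
    (1 - 4 * Var[X; μ] / μ[X] ^ 2) * log (1 + c * (μ[X] / 2)) ≤
      ∫ ω, log (1 + c * X ω) ∂μ := by
  set t := μ[X] / 2 with ht
  have ht0 : 0 < t := by positivity
  have hlog : 0 ≤ log (1 + c * t) := log_nonneg (le_add_of_nonneg_right (by positivity))
  have hlower_tail : μ.real {ω | X ω < t} ≤ 4 * Var[X; μ] / μ[X] ^ 2 := by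
    have hsub : {ω | X ω < t} ⊆ {ω | t ≤ |X ω - μ[X]|} := fun ω (hω : X ω < t) ↦ by
      show t ≤ |X ω - μ[X]|
      rw [abs_sub_comm, abs_of_pos (by linarith)]
      linarith
    calc μ.real {ω | X ω < t} ≤ μ.real {ω | t ≤ |X ω - μ[X]|} := measureReal_mono hsub
      _ ≤ Var[X; μ] / t ^ 2 :=
        ENNReal.toReal_le_of_le_ofReal (div_nonneg (variance_nonneg X μ) (sq_nonneg t))
          (meas_ge_le_variance_div_sq hX ht0)
      _ = 4 * Var[X; μ] / μ[X] ^ 2 := by rw [ht]; field_simp; ring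
  have hbulk : 1 - 4 * Var[X; μ] / μ[X] ^ 2 ≤ μ.real {ω | t ≤ X ω} := by
    have hcover : {ω | X ω < t} ∪ {ω | t ≤ X ω} = univ := by
      ext ω
      simp [lt_or_ge]
    have hunion := measureReal_union_le (μ := μ) {ω | X ω < t} {ω | t ≤ X ω}
    rw [hcover, probReal_univ] at hunion
    linarith
  have hmarkov := mul_meas_ge_le_integral_of_nonneg
    (hX0.mono fun ω hω ↦ log_nonneg (le_add_of_nonneg_right (mul_nonneg hc hω)))
    (integrable_log_one_add_mul hX0 (hX.integrable one_le_two) hc) (log (1 + c * t))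
  have hsub : {ω | t ≤ X ω} ⊆ {ω | log (1 + c * t) ≤ log (1 + c * X ω)} :=
    fun ω (hω : t ≤ X ω) ↦ log_le_log (by positivity) (by nlinarith)
  calc (1 - 4 * Var[X; μ] / μ[X] ^ 2) * log (1 + c * t)
      ≤ log (1 + c * t) * μ.real {ω | t ≤ X ω} := by
        rw [mul_comm]
        exact mul_le_mul_of_nonneg_left hbulk hlog
    _ ≤ log (1 + c * t) * μ.real {ω | log (1 + c * t) ≤ log (1 + c * X ω)} :=
        mul_le_mul_of_nonneg_left (measureReal_mono hsub) hlog
    _ ≤ ∫ ω, log (1 + c * X ω) ∂μ := hmarkov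

end LogOneAdd

namespace ProbabilityTheory

variable {a r : ℝ}

lemma measurable_gammaPDF (a r : ℝ) : Measurable (gammaPDF a r) :=
  (measurable_gammaPDFReal a r).ennreal_ofReal

lemma integral_gammaPDFReal (ha : 0 < a) (hr : 0 < r) : ∫ x, gammaPDFReal a r x = 1 := by
  rw [integral_eq_lintegral_of_nonneg_ae (ae_of_all _ (gammaPDFReal_nonneg ha hr))
    (measurable_gammaPDFReal a r).aestronglyMeasurable]
  exact congrArg ENNReal.toReal (lintegral_gammaPDF_eq_one ha hr)

lemma gammaPDFReal_mul_pow (ha : 0 < a) (hr : 0 < r) (n : ℕ) (x : ℝ) :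
    gammaPDFReal a r x * x ^ n =
      Gamma (a + n) / (Gamma a * r ^ n) * gammaPDFReal (a + n) r x := by
  rcases lt_trichotomy x 0 with hx | rfl | hx
  · simp [gammaPDFReal, not_le.mpr hx]
  · rcases n.eq_zero_or_pos with rfl | hn
    · simp [(Gamma_pos_of_pos ha).ne']
    · have hexp : a + n - 1 ≠ 0 := by
        have : (1 : ℝ) ≤ n := by exact_mod_cast hn
        linarith
      simp [gammaPDFReal, zero_rpow hexp, hn.ne']
  · have hxpow : x ^ (a + n - 1) = x ^ (a - 1) * x ^ n := by
      rw [← rpow_natCast, ← rpow_add hx]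
      ring_nf
    have hrpow : r ^ (a + n) = r ^ a * r ^ n := by rw [rpow_add hr, rpow_natCast]
    simp only [gammaPDFReal, if_pos hx.le, hxpow, hrpow]
    field_simp [(Gamma_pos_of_pos ha).ne', (Gamma_pos_of_pos (by positivity : 0 < a + n)).ne']

lemma integral_gammaMeasure_eq_integral_gammaPDFReal_mul (ha : 0 < a) (hr : 0 < r)
    (g : ℝ → ℝ) : ∫ x, g x ∂gammaMeasure a r = ∫ x, gammaPDFReal a r x * g x := by
  rw [gammaMeasure, integral_withDensity_eq_integral_toReal_smul
    (measurable_gammaPDF a r) (ae_of_all _ fun _ ↦ ENNReal.ofReal_lt_top)]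
  simp [gammaPDF, gammaPDFReal_nonneg ha hr]

lemma integrable_gammaMeasure_iff (ha : 0 < a) (hr : 0 < r) {g : ℝ → ℝ} :
    Integrable g (gammaMeasure a r) ↔ Integrable (fun x ↦ gammaPDFReal a r x * g x) := by
  rw [gammaMeasure, integrable_withDensity_iff_integrable_smul'
    (measurable_gammaPDF a r) (ae_of_all _ fun _ ↦ ENNReal.ofReal_lt_top)]
  simp [gammaPDF, gammaPDFReal_nonneg ha hr]

lemma ae_nonneg_gammaMeasure : ∀ᵐ x ∂gammaMeasure a r, 0 ≤ x := by
  rw [gammaMeasure, ae_withDensity_iff (measurable_gammaPDF a r)]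
  exact ae_of_all _ fun x hx ↦ not_lt.mp fun hneg ↦ hx (gammaPDF_of_neg hneg)

lemma integrable_pow_gammaMeasure (ha : 0 < a) (hr : 0 < r) (n : ℕ) :
    Integrable (fun x ↦ x ^ n) (gammaMeasure a r) := by
  rw [integrable_gammaMeasure_iff ha hr]
  simp_rw [gammaPDFReal_mul_pow ha hr]
  exact (Integrable.of_integral_ne_zero
    (by rw [integral_gammaPDFReal (by positivity) hr]; exact one_ne_zero)).const_mul _

lemma integral_pow_gammaMeasure (ha : 0 < a) (hr : 0 < r) (n : ℕ) :
    ∫ x, x ^ n ∂gammaMeasure a r = Gamma (a + n) / (Gamma a * r ^ n) := by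
  simp_rw [integral_gammaMeasure_eq_integral_gammaPDFReal_mul ha hr, gammaPDFReal_mul_pow ha hr]
  rw [integral_const_mul, integral_gammaPDFReal (by positivity) hr, mul_one]

lemma memLp_id_two_gammaMeasure (ha : 0 < a) (hr : 0 < r) : MemLp id 2 (gammaMeasure a r) :=
  (memLp_two_iff_integrable_sq aestronglyMeasurable_id).2 (integrable_pow_gammaMeasure ha hr 2)

lemma integral_id_gammaMeasure (ha : 0 < a) (hr : 0 < r) :
    ∫ x, x ∂gammaMeasure a r = a / r := by
  have h := integral_pow_gammaMeasure ha hr 1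
  simp only [pow_one, Nat.cast_one, Gamma_add_one ha.ne'] at h
  rw [h]
  field_simp [(Gamma_pos_of_pos ha).ne']

lemma variance_id_gammaMeasure (ha : 0 < a) (hr : 0 < r) :
    Var[id; gammaMeasure a r] = a / r ^ 2 := by
  have := isProbabilityMeasure_gammaMeasure ha hr
  have hsecond := integral_pow_gammaMeasure ha hr 2
  rw [show a + ((2 : ℕ) : ℝ) = (a + 1) + 1 by push_cast; ring, Gamma_add_one (by positivity),
    Gamma_add_one ha.ne'] at hsecond
  rw [variance_eq_sub (memLp_id_two_gammaMeasure ha hr)]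
  simp only [Pi.pow_apply, id_eq, hsecond, integral_id_gammaMeasure ha hr]
  field_simp [(Gamma_pos_of_pos ha).ne']
  ring

lemma integral_log_one_add_mul_gammaMeasure_mem_Icc (ha : 0 < a) (hr : 0 < r) {c : ℝ}
    (hc : 0 ≤ c) :
    ∫ x, log (1 + c * x) ∂gammaMeasure a r ∈
      Icc ((1 - 4 / a) * log (1 + c * (a / r / 2))) (log (1 + c * (a / r))) := by
  have := isProbabilityMeasure_gammaMeasure ha hr
  have hmem := memLp_id_two_gammaMeasure ha hr
  have hvar : Var[fun x ↦ x; gammaMeasure a r] = a / r ^ 2 := variance_id_gammaMeasure ha hr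
  have hlower := le_integral_log_one_add_mul ae_nonneg_gammaMeasure hmem hc
    (by simp only [integral_id_gammaMeasure ha hr]; positivity)
  have hupper :=
    integral_log_one_add_mul_le ae_nonneg_gammaMeasure (hmem.integrable one_le_two) hc
  have hratio : 4 * (a / r ^ 2) / (a / r) ^ 2 = 4 / a := by field_simp
  rw [integral_id_gammaMeasure ha hr, hvar, hratio] at hlower
  rw [integral_id_gammaMeasure ha hr] at hupper
  exact ⟨hlower, hupper⟩

end ProbabilityTheory

lemma tendsto_log_one_add_half_div_log_one_add :
    Tendsto (fun t : ℝ ↦ log (1 + t / 2) / log (1 + t)) atTop (𝓝 1) := by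
  have hden : Tendsto (fun t : ℝ ↦ log (1 + t)) atTop atTop :=
    tendsto_log_atTop.comp (tendsto_atTop_add_const_left _ 1 tendsto_id)
  have hlower : Tendsto (fun t ↦ 1 - log 2 / log (1 + t)) atTop (𝓝 1) := by
    simpa using tendsto_const_nhds.sub (tendsto_const_nhds.div_atTop hden)
  refine tendsto_of_tendsto_of_tendsto_of_le_of_le' hlower tendsto_const_nhds ?_ ?_
  all_goals filter_upwards [eventually_ge_atTop 1] with t ht
  all_goals have hpos : 0 < log (1 + t) := log_pos (by linarith)
  · have hhalve : log (1 + t) ≤ log 2 + log (1 + t / 2) := by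
      rw [← log_mul two_ne_zero (by positivity)]
      exact log_le_log (by positivity) (by linarith)
    rw [one_sub_div hpos.ne']
    gcongr
    linarith
  · rw [div_le_one hpos]
    exact log_le_log (by positivity) (by linarith)

theorem ergodic_rate_ratio_varying_scale_general (m P N₀ : ℝ) (θ : ℕ → ℝ)
    (hm : 0 < m) (hθ : ∀ L, 0 < θ L)
    (hdiv : Tendsto (fun L : ℕ => (P / N₀) * θ L * m * L) atTop atTop) :
    Tendsto (fun L : ℕ =>
        (∫ x, Real.log (1 + (P / N₀) * x) ∂(gammaMeasure (m * L) (θ L)⁻¹)) /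
          Real.log (1 + (P / N₀) * (θ L * m * L))) atTop (nhds 1) := by
  set c := P / N₀
  have hsnr : Tendsto (fun L : ℕ ↦ c * (θ L * m * L)) atTop atTop := by
    simpa only [mul_assoc] using hdiv
  have hc : 0 < c := by
    obtain ⟨L, hL⟩ := (hsnr.eventually_gt_atTop 0).exists
    exact pos_of_mul_pos_left hL (by have := hθ L; positivity)
  have hshape : Tendsto (fun L : ℕ ↦ 1 - 4 / (m * L)) atTop (𝓝 1) := by
    simpa using tendsto_const_nhds.sub
      (tendsto_const_nhds.div_atTop (tendsto_natCast_atTop_atTop.const_mul_atTop hm))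
  have hlower := hshape.mul (tendsto_log_one_add_half_div_log_one_add.comp hsnr)
  have hbounds : ∀ᶠ L : ℕ in atTop,
      (∫ x, log (1 + c * x) ∂gammaMeasure (m * L) (θ L)⁻¹) ∈
        Icc ((1 - 4 / (m * L)) * log (1 + c * (θ L * m * L / 2)))
          (log (1 + c * (θ L * m * L))) := by
    filter_upwards [eventually_gt_atTop 0] with L hL
    have hmean : m * L / (θ L)⁻¹ = θ L * m * L := by rw [div_inv_eq_mul]; ring
    simpa only [hmean] using integral_log_one_add_mul_gammaMeasure_mem_Icc
      (a := m * L) (by positivity) (inv_pos.2 (hθ L)) hc.le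
  refine tendsto_of_tendsto_of_tendsto_of_le_of_le' (by simpa using hlower)
    tendsto_const_nhds ?_ ?_
  all_goals filter_upwards [hbounds, hsnr.eventually_ge_atTop 1] with L ⟨hlo, hup⟩ hL1
  all_goals have hden : 0 < log (1 + c * (θ L * m * L)) := log_pos (by linarith)
  · rw [← mul_div_assoc, mul_div_assoc c]
    exact div_le_div_of_nonneg_right hlo hden.le
  · exact (div_le_one hden).2 hup

theorem ergodic_rate_ratio_varying_scale (m P N₀ : ℝ) (θ : ℕ → ℝ)
    (hm : 0 < m) (hθ : ∀ L, 0 < θ L) (hP : 0 < P) (hN : 0 < N₀)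
    (hdiv : Tendsto (fun L : ℕ => (P / N₀) * θ L * m * L) atTop atTop) :
    Tendsto (fun L : ℕ =>
        (∫ x, Real.log (1 + (P / N₀) * x) ∂(gammaMeasure (m * L) (θ L)⁻¹)) /
          Real.log (1 + (P / N₀) * (θ L * m * L))) atTop (nhds 1) :=
  ergodic_rate_ratio_varying_scale_general m P N₀ θ hm hθ hdiv
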